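/- arXiv:1310.8240 — 8 statements merged into one kernel-verified Lean document; each statement's English description precedes it below -/
import Mathlib

section
/- Let H be a reproducing kernel Hilbert space on a measurable space X with measurable kernel k, and let P, Q be Borel probability measures on X with ∫√k(x,x) dP(x) < ∞ and ∫√k(x,x) dQ(x) < ∞. Then sup{|∫f dP − ∫f dQ| : f ∈ H, ‖f‖_H ≤ 1} = ‖∫k(·,x) dP(x) − ∫k(·,x) dQ(x)‖_H, where the integrals of k(·,x) are Bochner integrals. -/
open MeasureTheory
open scoped RealInnerProductSpace

/-! The functions of the unit ball are `x ↦ ⟪h, Φ x⟫`, so integrating against `P - Q` commutes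
with the inner product and the discrepancy of `h` is `⟪h, μ_P - μ_Q⟫`, where `μ_P = ∫ Φ dP` is the
mean embedding. The supremum of `|⟪h, v⟫|` over the closed unit ball is `‖v‖` (Cauchy–Schwarz,
attained at `v / ‖v‖`), i.e. the operator norm of `⟪·, v⟫`, which equals `‖v‖`. -/

theorem iSup_unitClosedBall_abs_real_inner_eq_norm {E : Type*} [NormedAddCommGroup E]
    [InnerProductSpace ℝ E] (v : E) :
    ⨆ h : {h : E // ‖h‖ ≤ 1}, |⟪(h : E), v⟫| = ‖v‖ := by
  have hrange : Set.range (fun h : {h : E // ‖h‖ ≤ 1} => |⟪(h : E), v⟫|)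
      = (fun h => ‖innerSL ℝ v h‖) '' Metric.closedBall 0 1 := by
    ext r
    simp [real_inner_comm]
  rw [iSup, hrange, ContinuousLinearMap.sSup_unitClosedBall_eq_norm, innerSL_apply_norm]

theorem integral_inner_sub_integral_inner {X E : Type*} [MeasurableSpace X]
    [NormedAddCommGroup E] [InnerProductSpace ℝ E] [CompleteSpace E]
    {Φ : X → E} {P Q : Measure X} (hP : Integrable Φ P) (hQ : Integrable Φ Q) (h : E) :
    (∫ x, ⟪h, Φ x⟫ ∂P) - ∫ x, ⟪h, Φ x⟫ ∂Q = ⟪h, (∫ x, Φ x ∂P) - ∫ x, Φ x ∂Q⟫ := by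
  rw [integral_inner hP, integral_inner hQ, inner_sub_right]

theorem stmt_0_general
    {X : Type*} [MeasurableSpace X]
    {H : Type*} [NormedAddCommGroup H] [InnerProductSpace ℝ H] [CompleteSpace H]
    (Φ : X → H)
    (P Q : Measure X)
    (hP : Integrable Φ P) (hQ : Integrable Φ Q) :
    (⨆ h : {h : H // ‖h‖ ≤ 1}, |(∫ x, ⟪(h : H), Φ x⟫ ∂P) - ∫ x, ⟪(h : H), Φ x⟫ ∂Q|)
      = ‖(∫ x, Φ x ∂P) - ∫ x, Φ x ∂Q‖ := by
  simp only [integral_inner_sub_integral_inner hP hQ]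
  exact iSup_unitClosedBall_abs_real_inner_eq_norm _

/-- For an RKHS on `X` (modeled via its feature map `Φ : X → H`, so that
the kernel is `k x y = ⟪Φ x, Φ y⟫` and the functions in the RKHS unit ball are
`x ↦ ⟪h, Φ x⟫` with `‖h‖ ≤ 1`), and Borel probability measures `P, Q` with Bochner-integrable
feature map (`∫ √k(x,x) dP = ∫ ‖Φ x‖ dP < ∞`), we have
`sup_{‖f‖ ≤ 1} |∫ f dP − ∫ f dQ| = ‖∫ k(·,x) dP(x) − ∫ k(·,x) dQ(x)‖_H`. -/
theorem stmt_0
    {X : Type*} [MeasurableSpace X]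
    {H : Type*} [NormedAddCommGroup H] [InnerProductSpace ℝ H] [CompleteSpace H]
    (Φ : X → H)
    (P Q : Measure X) [IsProbabilityMeasure P] [IsProbabilityMeasure Q]
    (hP : Integrable Φ P) (hQ : Integrable Φ Q) :
    (⨆ h : {h : H // ‖h‖ ≤ 1}, |(∫ x, ⟪(h : H), Φ x⟫ ∂P) - ∫ x, ⟪(h : H), Φ x⟫ ∂Q|)
      = ‖(∫ x, Φ x ∂P) - ∫ x, Φ x ∂Q‖ :=
  stmt_0_general Φ P Q hP hQ
end

section
/- Let ψ_σ(x) := exp(−σ‖x‖²) on ℝ^d and H_σ the Gaussian RKHS with kernel (x,y) ↦ ψ_σ(x−y), with norm ‖f‖²_{H_σ} = (4πσ)^{d/2} ∫ |f̂(ω)|² e^{‖ω‖²/(4σ)} dω. Then for 0 < σ < τ < ∞, H_σ ⊆ H_τ and for every f ∈ H_σ, ‖f‖²_{H_τ} ≤ (τ/σ)^{d/2} ‖f‖²_{H_σ}. -/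
open MeasureTheory
open scoped FourierTransform

/-- Gaussian RKHS nesting. For `0 < σ < τ` and `f : ℝ^d → ℂ`, membership in the
Gaussian RKHS `H_σ` is characterized by finiteness of the weighted Fourier integral
`‖f‖²_{H_σ} = (4πσ)^{d/2} ∫ |f̂(ω)|² e^{‖ω‖²/(4σ)} dω`. If `f ∈ H_σ` then `f ∈ H_τ`
(i.e. the `τ`-weighted integral is finite) and `‖f‖²_{H_τ} ≤ (τ/σ)^{d/2} ‖f‖²_{H_σ}`. -/
theorem stmt_7 (d : ℕ) (σ τ : ℝ) (hσ : 0 < σ) (hστ : σ < τ)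
    (f : EuclideanSpace ℝ (Fin d) → ℂ)
    (hf : Integrable (fun ω : EuclideanSpace ℝ (Fin d) =>
      ‖𝓕 f ω‖ ^ 2 * Real.exp (‖ω‖ ^ 2 / (4 * σ)))) :
    Integrable (fun ω : EuclideanSpace ℝ (Fin d) =>
      ‖𝓕 f ω‖ ^ 2 * Real.exp (‖ω‖ ^ 2 / (4 * τ))) ∧
    (4 * Real.pi * τ) ^ ((d : ℝ) / 2)
        * ∫ ω : EuclideanSpace ℝ (Fin d), ‖𝓕 f ω‖ ^ 2 * Real.exp (‖ω‖ ^ 2 / (4 * τ))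
      ≤ (τ / σ) ^ ((d : ℝ) / 2)
        * ((4 * Real.pi * σ) ^ ((d : ℝ) / 2)
          * ∫ ω : EuclideanSpace ℝ (Fin d), ‖𝓕 f ω‖ ^ 2 * Real.exp (‖ω‖ ^ 2 / (4 * σ))) := by
  have hτ : 0 < τ := hσ.trans hστ
  have hmono : ∀ ω : EuclideanSpace ℝ (Fin d),
      ‖𝓕 f ω‖ ^ 2 * Real.exp (‖ω‖ ^ 2 / (4 * τ)) ≤ ‖𝓕 f ω‖ ^ 2 * Real.exp (‖ω‖ ^ 2 / (4 * σ)) := by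
    intro ω
    apply mul_le_mul_of_nonneg_left _ (by positivity)
    apply Real.exp_le_exp.mpr
    apply div_le_div_of_nonneg_left (by positivity) (by positivity)
    nlinarith
  have hae : AEStronglyMeasurable (fun ω : EuclideanSpace ℝ (Fin d) =>
      ‖𝓕 f ω‖ ^ 2 * Real.exp (‖ω‖ ^ 2 / (4 * τ))) volume := by
    have heq : (fun ω : EuclideanSpace ℝ (Fin d) =>
        ‖𝓕 f ω‖ ^ 2 * Real.exp (‖ω‖ ^ 2 / (4 * τ)))
        = fun ω => (‖𝓕 f ω‖ ^ 2 * Real.exp (‖ω‖ ^ 2 / (4 * σ)))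
          * Real.exp (‖ω‖ ^ 2 / (4 * τ) - ‖ω‖ ^ 2 / (4 * σ)) := by
      funext ω
      rw [mul_assoc, ← Real.exp_add]
      ring_nf
    rw [heq]
    exact hf.aestronglyMeasurable.mul
      (Continuous.aestronglyMeasurable (by fun_prop))
  have hint : Integrable (fun ω : EuclideanSpace ℝ (Fin d) =>
      ‖𝓕 f ω‖ ^ 2 * Real.exp (‖ω‖ ^ 2 / (4 * τ))) := by
    refine hf.mono hae ?_
    filter_upwards with ω
    rw [Real.norm_of_nonneg (by positivity), Real.norm_of_nonneg (by positivity)]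
    exact hmono ω
  refine ⟨hint, ?_⟩
  have hpow : (4 * Real.pi * τ) ^ ((d : ℝ) / 2)
      = (τ / σ) ^ ((d : ℝ) / 2) * (4 * Real.pi * σ) ^ ((d : ℝ) / 2) := by
    rw [← Real.mul_rpow (by positivity) (by positivity)]
    congr 1
    field_simp
  rw [hpow, mul_assoc]
  apply mul_le_mul_of_nonneg_left _ (by positivity)
  apply mul_le_mul_of_nonneg_left _ (by positivity)
  exact integral_mono hint hf hmono
end

section
/- The family F = {f_σ : ℝ^d × ℝ^d → ℝ, f_σ(x,y) = e^{−σ‖x−y‖²}, σ ∈ (0,∞)} has pseudo-dimension (VC-subgraph index) equal to 1; that is, no two-point set {(x₁,y₁),(x₂,y₂)} ⊂ ℝ^d × ℝ^d is pseudo-shattered by F. -/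
/-!
For a fixed point `z = (x, y)` the value `e^{-σ‖x-y‖²}` is antitone in `σ`, so every point of
`ℝ^d × ℝ^d` orders the parameters `σ` the same way. Two sign patterns that disagree on two points
would have to order two parameters in opposite ways, which is impossible. One point with `x ≠ y`
is pseudo-shattered at the threshold `e^{-‖x-y‖²}`, since the value is strictly antitone in `σ`.
-/

lemma Real.antitone_exp_neg_mul {c : ℝ} (hc : 0 ≤ c) : Antitone fun σ : ℝ => Real.exp (-σ * c) :=
  fun _ _ h => Real.exp_le_exp.mpr (by nlinarith)

lemma Real.strictAnti_exp_neg_mul {c : ℝ} (hc : 0 < c) :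
    StrictAnti fun σ : ℝ => Real.exp (-σ * c) :=
  fun _ _ h => Real.exp_lt_exp.mpr (by nlinarith)

lemma Antitone.apply_le_apply_of_apply_lt {α β γ : Type*} [LinearOrder α] [Preorder β]
    [Preorder γ] {g₀ : α → β} {g₁ : α → γ} (h₀ : Antitone g₀) (h₁ : Antitone g₁) {a b : α}
    (h : g₀ a < g₀ b) : g₁ a ≤ g₁ b :=
  h₁ (h₀.reflect_lt h).le

lemma exists_pos_exp_neg_mul_gt_or_lt {c : ℝ} (hc : 0 < c) (b : Bool) :
    ∃ σ : ℝ, 0 < σ ∧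
      if b then Real.exp (-σ * c) > Real.exp (-c) else Real.exp (-σ * c) < Real.exp (-c) := by
  have h := Real.strictAnti_exp_neg_mul hc
  cases b
  · exact ⟨2, two_pos, by simpa using h (one_lt_two : (1 : ℝ) < 2)⟩
  · exact ⟨1 / 2, one_half_pos, by simpa using h (one_half_lt_one : (1 / 2 : ℝ) < 1)⟩

/-- The Gaussian family
`F = {(x,y) ↦ e^{−σ‖x−y‖²} : σ ∈ (0,∞)}` on `ℝ^d × ℝ^d` has pseudo-dimension exactly 1:
some one-point set is pseudo-shattered, but no two-point set is pseudo-shattered.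
(A set `{z_i}` is pseudo-shattered if there are reals `r_i` such that for every sign pattern
`b` there is `f_b ∈ F` with `f_b(z_i) > r_i` iff `b_i = 1` and `f_b(z_i) < r_i` otherwise.) -/
theorem stmt_8 (d : ℕ) (hd : 0 < d) :
    (∃ (z : (EuclideanSpace ℝ (Fin d)) × (EuclideanSpace ℝ (Fin d))) (r : ℝ),
      ∀ b : Bool, ∃ σ : ℝ, 0 < σ ∧
        (if b then Real.exp (-σ * ‖z.1 - z.2‖ ^ 2) > r
         else Real.exp (-σ * ‖z.1 - z.2‖ ^ 2) < r)) ∧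
    (∀ z : Fin 2 → (EuclideanSpace ℝ (Fin d)) × (EuclideanSpace ℝ (Fin d)),
      Function.Injective z →
      ¬ ∃ r : Fin 2 → ℝ, ∀ b : Fin 2 → Bool, ∃ σ : ℝ, 0 < σ ∧
        ∀ i, if b i then Real.exp (-σ * ‖(z i).1 - (z i).2‖ ^ 2) > r i
             else Real.exp (-σ * ‖(z i).1 - (z i).2‖ ^ 2) < r i) := by
  constructor
  · have : Nonempty (Fin d) := ⟨⟨0, hd⟩⟩
    obtain ⟨x, hx⟩ := exists_ne (0 : EuclideanSpace ℝ (Fin d))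
    have hc : 0 < ‖x - 0‖ ^ 2 := by rw [sub_zero]; exact pow_pos (norm_pos_iff.mpr hx) 2
    exact ⟨(x, 0), _, exists_pos_exp_neg_mul_gt_or_lt hc⟩
  · rintro z - ⟨r, hr⟩
    have hanti i := Real.antitone_exp_neg_mul (sq_nonneg ‖(z i).1 - (z i).2‖)
    obtain ⟨σ₁, -, h₁⟩ := hr ![false, true]
    obtain ⟨σ₂, -, h₂⟩ := hr ![true, false]
    have h₁₀ := h₁ 0; have h₁₁ := h₁ 1; have h₂₀ := h₂ 0; have h₂₁ := h₂ 1
    simp only [Matrix.cons_val_zero, Matrix.cons_val_one, if_true,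
      Bool.false_eq_true, if_false] at h₁₀ h₁₁ h₂₀ h₂₁
    exact ((hanti 0).apply_le_apply_of_apply_lt (hanti 1) (h₁₀.trans h₂₀)).not_gt (h₂₁.trans h₁₁)
end

section
/- Let θ ≥ 0 and δ₁,…,δ_d > 0. The family F = {f_σ(x,y) = σ^θ ∏_{i=1}^d (σ(x_i−y_i)²)^{δ_i} e^{−σ(x_i−y_i)²} : σ ∈ (0,∞)} of functions on ℝ^d × ℝ^d has pseudo-dimension at most 2: no three-point set is pseudo-shattered by F. -/
/-!
For a fixed pair `(x, y)` put `t_j = (x_j - y_j)²`. If some `t_j` vanishes, `σ ↦ f_σ(x, y)` is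
identically zero; otherwise its logarithm `(θ + ∑ δ_j) log σ - σ ∑ t_j + const` is concave, so
`σ ↦ f_σ(x, y)` is quasiconcave and its strict superlevel sets are intervals. For a family with a
single real parameter and this property, pseudo-shattering fails on three points: let `σ₊` realise
the all-`true` pattern and `σᵢ` the pattern that is `false` only at `i`. Two of the three `σᵢ`
lie on the same side of `σ₊`, and the inner one, say `σᵢ`, lies between `σⱼ` and `σ₊`, where
`f(zᵢ)` exceeds `rᵢ`; quasiconcavity then contradicts `f_{σᵢ}(zᵢ) < rᵢ`.
-/

open Set Real

def PseudoShatters {Z ι : Type*} (F : Set (Z → ℝ)) (z : ι → Z) : Prop :=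
  ∃ r : ι → ℝ, ∀ b : ι → Bool, ∃ f ∈ F, ∀ i, if b i then f (z i) > r i else f (z i) < r i

theorem Set.mem_uIcc_or_mem_uIcc_of_lt_iff_lt {α : Type*} [LinearOrder α] {x y t : α}
    (h : x < t ↔ y < t) : x ∈ uIcc y t ∨ y ∈ uIcc x t := by
  simp only [mem_uIcc]
  rcases le_total x y with hxy | hxy <;> rcases lt_or_ge x t with hxt | hxt <;> grind

theorem not_pseudoShatters_image_of_ordConnected {α Z ι : Type*} [LinearOrder α] [Fintype ι]
    (hι : 2 < Fintype.card ι) {s : Set α} {f : α → Z → ℝ}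
    (hf : ∀ p c, {σ ∈ s | c < f σ p}.OrdConnected) (z : ι → Z) :
    ¬ PseudoShatters (f '' s) z := by
  classical
  rintro ⟨r, hr⟩
  simp only [exists_mem_image] at hr
  choose σ hσs hσ using hr
  set top := σ fun _ => true
  set miss := fun i => σ fun j => decide (j ≠ i)
  have above_top : ∀ i, r i < f top (z i) := fun i => by simpa using hσ (fun _ => true) i
  have below_miss : ∀ i, f (miss i) (z i) < r i := fun i => by
    have h := hσ (fun j => decide (j ≠ i)) i
    rwa [if_neg (by simp)] at h
  have above_miss : ∀ i j, i ≠ j → r i < f (miss j) (z i) := fun i j hij => by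
    have h := hσ (fun k => decide (k ≠ j)) i
    rwa [if_pos (by simpa using hij)] at h
  have not_between : ∀ i j, i ≠ j → miss i ∉ uIcc (miss j) top := fun i j hij hmem =>
    (below_miss i).not_gt ((hf (z i) (r i)).uIcc_subset ⟨hσs _, above_miss i j hij⟩
      ⟨hσs _, above_top i⟩ hmem).2
  obtain ⟨i, j, hij, hside⟩ := Fintype.exists_ne_map_eq_of_card_lt
    (fun i => decide (miss i < top)) (by simpa using hι)
  rcases mem_uIcc_or_mem_uIcc_of_lt_iff_lt (decide_eq_decide.mp hside) with h | h
  · exact not_between i j hij h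
  · exact not_between j i hij.symm h

theorem QuasiconcaveOn.congr {𝕜 E β : Type*} [Semiring 𝕜] [PartialOrder 𝕜] [AddCommMonoid E]
    [SMul 𝕜 E] [Preorder β] {s : Set E} {f g : E → β} (hf : QuasiconcaveOn 𝕜 s f)
    (hfg : EqOn f g s) : QuasiconcaveOn 𝕜 s g := fun r => by
  convert hf r using 1
  ext x
  exact and_congr_right fun hx => by rw [hfg hx]

theorem quasiconcaveOn_rpow_mul_prod_rpow_mul_exp {ι : Type*} [Fintype ι] {θ : ℝ} (hθ : 0 ≤ θ)
    {δ : ι → ℝ} (hδ : ∀ j, 0 < δ j) {t : ι → ℝ} (ht : ∀ j, 0 ≤ t j) :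
    QuasiconcaveOn ℝ (Ioi 0) fun σ => σ ^ θ * ∏ j, ((σ * t j) ^ δ j * exp (-σ * t j)) := by
  by_cases hzero : ∃ j, t j = 0
  · obtain ⟨j, hj⟩ := hzero
    have hvanish : (fun σ : ℝ => σ ^ θ * ∏ j, ((σ * t j) ^ δ j * exp (-σ * t j))) = 0 := by
      ext σ
      rw [Pi.zero_apply, Finset.prod_eq_zero (Finset.mem_univ j)
        (by rw [hj, mul_zero, zero_rpow (hδ j).ne', zero_mul]), mul_zero]
    rw [hvanish]
    exact (concaveOn_const 0 (convex_Ioi 0)).quasiconcaveOn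
  push Not at hzero
  have htpos : ∀ j, 0 < t j := fun j => (ht j).lt_of_ne' (hzero j)
  have hP : 0 ≤ θ + ∑ j, δ j := add_nonneg hθ (Finset.sum_nonneg fun j _ => (hδ j).le)
  have hlog : ConcaveOn ℝ (Ioi 0) fun σ =>
      (θ + ∑ j, δ j) * log σ - (∑ j, t j) * σ + ∑ j, δ j * log (t j) :=
    ((strictConcaveOn_log_Ioi.concaveOn.smul hP).sub
      ((convexOn_id (convex_Ioi 0)).smul (Finset.sum_nonneg fun j _ => ht j))).add_const _
  refine (hlog.quasiconcaveOn.monotone_comp exp_monotone).congr fun σ (hσ : 0 < σ) => ?_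
  have hfactor : ∀ j, (σ * t j) ^ δ j * exp (-σ * t j) =
      exp (δ j * log σ + δ j * log (t j) - t j * σ) := fun j => by
    rw [rpow_def_of_pos (mul_pos hσ (htpos j)), log_mul hσ.ne' (htpos j).ne', ← exp_add]
    ring_nf
  simp only [Function.comp_apply, hfactor, ← exp_sum, rpow_def_of_pos hσ, ← exp_add]
  congr 1
  simp only [Finset.sum_sub_distrib, Finset.sum_add_distrib, ← Finset.sum_mul]
  ring

/-- For `θ ≥ 0` and `δ₁,…,δ_d > 0`, the family
`F = {(x,y) ↦ σ^θ ∏_i (σ(x_i−y_i)²)^{δ_i} e^{−σ(x_i−y_i)²} : σ ∈ (0,∞)}` of functions on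
`ℝ^d × ℝ^d` has pseudo-dimension at most 2: no three-point set is pseudo-shattered by `F`. -/
theorem stmt_9 (d : ℕ) (θ : ℝ) (hθ : 0 ≤ θ) (δ : Fin d → ℝ) (hδ : ∀ i, 0 < δ i) :
    ∀ z : Fin 3 → (Fin d → ℝ) × (Fin d → ℝ), Function.Injective z →
      ¬ ∃ r : Fin 3 → ℝ, ∀ b : Fin 3 → Bool, ∃ σ : ℝ, 0 < σ ∧
        ∀ i, if b i
          then σ ^ θ * ∏ j, ((σ * ((z i).1 j - (z i).2 j) ^ 2) ^ (δ j)
                 * Real.exp (-σ * ((z i).1 j - (z i).2 j) ^ 2)) > r i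
          else σ ^ θ * ∏ j, ((σ * ((z i).1 j - (z i).2 j) ^ 2) ^ (δ j)
                 * Real.exp (-σ * ((z i).1 j - (z i).2 j) ^ 2)) < r i := by
  intro z _ ⟨r, hr⟩
  let f : ℝ → (Fin d → ℝ) × (Fin d → ℝ) → ℝ := fun σ p =>
    σ ^ θ * ∏ j, ((σ * (p.1 j - p.2 j) ^ 2) ^ (δ j) * exp (-σ * (p.1 j - p.2 j) ^ 2))
  have hquasi : ∀ p c, {σ ∈ Ioi 0 | c < f σ p}.OrdConnected := fun p c =>
    ((quasiconcaveOn_rpow_mul_prod_rpow_mul_exp hθ hδ fun _ => sq_nonneg _).convex_gt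
      c).ordConnected
  refine not_pseudoShatters_image_of_ordConnected (by simp) hquasi z ⟨r, fun b => ?_⟩
  obtain ⟨σ, hσ, hb⟩ := hr b
  exact ⟨f σ, mem_image_of_mem f hσ, hb⟩
end

section
/- Let k(x,y) = ψ(x−y) be a bounded continuous translation-invariant kernel on ℝ^d with spectral measure Υ (i.e., ψ = Υ̂). If the support of Υ is all of ℝ^d, then ∬ k dμ dμ > 0 for every nonzero finite signed Borel measure μ; in particular the kernel mean embedding μ ↦ ∫ k(·,x) dμ(x) is injective on finite signed measures. -/
/-!
Bochner's representation `ψ(v) = ∫ exp(-i⟪v, ω⟫) dΥ(ω)` and Fubini turn the kernel energy of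
`μ₁ - μ₂` into `∫ ‖μ̂₁ - μ̂₂‖² dΥ`, where `μ̂` is the characteristic function. The integrand is
continuous and, by uniqueness of characteristic functions, not identically zero when `μ₁ ≠ μ₂`;
since `Υ` charges every nonempty open set, the integral is positive. If `μ₁` and `μ₂` have the
same mean embedding `∫ Φ`, then `∫ ψ(x - y) dμᵢ(y) = ⟪Φ x, ∫ Φ dμᵢ⟫` forces the energy to vanish.
-/

open MeasureTheory Complex
open scoped RealInnerProductSpace ComplexConjugate

lemma integral_integral_swap_of_norm_le {X Y F : Type*} [MeasurableSpace X] [MeasurableSpace Y]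
    [NormedAddCommGroup F] [NormedSpace ℝ F] {μ : Measure X} {ν : Measure Y}
    [IsFiniteMeasure μ] [IsFiniteMeasure ν] {f : X → Y → F}
    (hf : AEStronglyMeasurable (Function.uncurry f) (μ.prod ν)) (C : ℝ)
    (hC : ∀ x y, ‖f x y‖ ≤ C) :
    ∫ x, ∫ y, f x y ∂ν ∂μ = ∫ y, ∫ x, f x y ∂μ ∂ν :=
  integral_integral_swap (.of_bound hf C (ae_of_all _ fun p => hC p.1 p.2))

lemma integral_kernel_eq_inner_integral {X H : Type*} [AddGroup X] [MeasurableSpace X]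
    [NormedAddCommGroup H] [InnerProductSpace ℝ H] [CompleteSpace H]
    {Φ : X → H} {ψ : X → ℝ} (hk : ∀ x y, ⟪Φ x, Φ y⟫ = ψ (x - y)) {μ : Measure X}
    (hΦ : Integrable Φ μ) (x : X) :
    ∫ y, ψ (x - y) ∂μ = ⟪Φ x, ∫ y, Φ y ∂μ⟫ := by
  simp_rw [← hk]
  exact integral_inner hΦ (Φ x)

section CharFun

variable {E : Type*} [NormedAddCommGroup E] [InnerProductSpace ℝ E]

lemma cexp_neg_I_mul_inner_sub (x y ω : E) :
    cexp (-I * ((⟪x - y, ω⟫ : ℝ) : ℂ)) = cexp (⟪y, ω⟫ * I) * conj (cexp (⟪x, ω⟫ * I)) := by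
  rw [← exp_conj, ← Complex.exp_add, inner_sub_left]
  congr 1
  simp only [map_mul, conj_ofReal, conj_I, ofReal_sub]
  ring

variable [MeasurableSpace E]

lemma norm_charFun_sub_le {μ₁ μ₂ : Measure E} (ω : E) :
    ‖charFun μ₁ ω - charFun μ₂ ω‖ ≤ μ₁.real Set.univ + μ₂.real Set.univ :=
  (norm_sub_le _ _).trans (add_le_add (norm_charFun_le ω) (norm_charFun_le ω))

variable [BorelSpace E] [SecondCountableTopology E] {Υ : Measure E} [IsFiniteMeasure Υ]

lemma integral_integral_mul_conj_cexp_inner (μ : Measure E) [IsFiniteMeasure μ] {F : E → ℂ}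
    (hF : AEStronglyMeasurable F Υ) {C : ℝ} (hFC : ∀ ω, ‖F ω‖ ≤ C) :
    ∫ x, ∫ ω, F ω * conj (cexp (⟪x, ω⟫ * I)) ∂Υ ∂μ = ∫ ω, F ω * conj (charFun μ ω) ∂Υ := by
  have hmeas : AEStronglyMeasurable
      (Function.uncurry fun x ω => F ω * conj (cexp (⟪x, ω⟫ * I))) (μ.prod Υ) :=
    hF.comp_snd.mul
      (by fun_prop : Continuous fun p : E × E => conj (cexp (⟪p.1, p.2⟫ * I))).aestronglyMeasurable
  rw [integral_integral_swap_of_norm_le hmeas C fun x ω => by simpa [norm_exp] using hFC ω]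
  simp_rw [integral_const_mul, integral_conj, charFun_apply]

lemma integrable_charFun_mul_conj_cexp_inner (μ : Measure E) [IsFiniteMeasure μ] (x : E) :
    Integrable (fun ω => charFun μ ω * conj (cexp (⟪x, ω⟫ * I))) Υ :=
  .of_bound (by fun_prop) (μ.real Set.univ) <| ae_of_all _ fun ω => by
    simpa [norm_exp] using norm_charFun_le ω

lemma integrable_mul_conj_charFun {F : E → ℂ} (hF : AEStronglyMeasurable F Υ) {C : ℝ}
    (hFC : ∀ ω, ‖F ω‖ ≤ C) (μ : Measure E) [IsFiniteMeasure μ] :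
    Integrable (fun ω => F ω * conj (charFun μ ω)) Υ :=
  .of_bound (hF.mul (by fun_prop)) (C * μ.real Set.univ) <| ae_of_all _ fun ω => by
    rw [norm_mul, RCLike.norm_conj]
    exact mul_le_mul (hFC ω) (norm_charFun_le ω) (norm_nonneg _) ((norm_nonneg _).trans (hFC ω))

lemma integral_norm_charFun_sub_sq_pos [CompleteSpace E] [Υ.IsOpenPosMeasure]
    {μ₁ μ₂ : Measure E} [IsFiniteMeasure μ₁] [IsFiniteMeasure μ₂] (hne : μ₁ ≠ μ₂) :
    0 < ∫ ω, ‖charFun μ₁ ω - charFun μ₂ ω‖ ^ 2 ∂Υ := by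
  obtain ⟨ω₀, hω₀⟩ : ∃ ω, charFun μ₁ ω ≠ charFun μ₂ ω := by
    by_contra! h
    exact hne (Measure.ext_of_charFun (funext h))
  refine integral_pos_of_integrable_nonneg_nonzero (x := ω₀) (by fun_prop) ?_
    (fun _ => by positivity) (by simpa [sub_eq_zero] using hω₀)
  refine .of_bound (by fun_prop) ((μ₁.real Set.univ + μ₂.real Set.univ) ^ 2)
    (ae_of_all _ fun ω => ?_)
  rw [Real.norm_of_nonneg (by positivity)]
  exact pow_le_pow_left₀ (norm_nonneg _) (norm_charFun_sub_le ω) 2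

variable {ψ : E → ℝ}
  (hψ : ∀ v, (ψ v : ℂ) = ∫ ω, cexp (-I * ((⟪v, ω⟫ : ℝ) : ℂ)) ∂Υ)
include hψ

lemma ofReal_integral_kernel_eq_integral_charFun_mul (μ : Measure E) [IsFiniteMeasure μ] (x : E) :
    ((∫ y, ψ (x - y) ∂μ : ℝ) : ℂ) = ∫ ω, charFun μ ω * conj (cexp (⟪x, ω⟫ * I)) ∂Υ := by
  have hmeas : AEStronglyMeasurable
      (Function.uncurry fun y ω => cexp (⟪y, ω⟫ * I) * conj (cexp (⟪x, ω⟫ * I))) (μ.prod Υ) :=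
    (by fun_prop : Continuous fun p : E × E => cexp (⟪p.1, p.2⟫ * I) * conj (cexp (⟪x, p.2⟫ * I)))
      |>.aestronglyMeasurable
  rw [← integral_complex_ofReal]
  simp_rw [hψ, cexp_neg_I_mul_inner_sub]
  rw [integral_integral_swap_of_norm_le hmeas 1 fun y ω => by simp [norm_exp]]
  simp_rw [integral_mul_const, charFun_apply]

lemma energy_eq_integral_norm_charFun_sub_sq
    (μ₁ μ₂ : Measure E) [IsFiniteMeasure μ₁] [IsFiniteMeasure μ₂] :
    (∫ x, ((∫ y, ψ (x - y) ∂μ₁) - ∫ y, ψ (x - y) ∂μ₂) ∂μ₁)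
        - (∫ x, ((∫ y, ψ (x - y) ∂μ₁) - ∫ y, ψ (x - y) ∂μ₂) ∂μ₂)
      = ∫ ω, ‖charFun μ₁ ω - charFun μ₂ ω‖ ^ 2 ∂Υ := by
  set D : E → ℂ := fun ω => charFun μ₁ ω - charFun μ₂ ω
  have hDm : AEStronglyMeasurable D Υ := by fun_prop
  have hmean (x : E) : (((∫ y, ψ (x - y) ∂μ₁) - ∫ y, ψ (x - y) ∂μ₂ : ℝ) : ℂ)
      = ∫ ω, D ω * conj (cexp (⟪x, ω⟫ * I)) ∂Υ := by
    rw [ofReal_sub, ofReal_integral_kernel_eq_integral_charFun_mul hψ,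
      ofReal_integral_kernel_eq_integral_charFun_mul hψ, ← integral_sub
      (integrable_charFun_mul_conj_cexp_inner μ₁ x) (integrable_charFun_mul_conj_cexp_inner μ₂ x)]
    simp_rw [D, sub_mul]
  apply ofReal_injective
  calc _ = (∫ x, ∫ ω, D ω * conj (cexp (⟪x, ω⟫ * I)) ∂Υ ∂μ₁)
        - ∫ x, ∫ ω, D ω * conj (cexp (⟪x, ω⟫ * I)) ∂Υ ∂μ₂ := by
        simp_rw [ofReal_sub, ← integral_complex_ofReal, hmean]
    _ = (∫ ω, D ω * conj (charFun μ₁ ω) ∂Υ) - ∫ ω, D ω * conj (charFun μ₂ ω) ∂Υ := by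
        rw [integral_integral_mul_conj_cexp_inner μ₁ hDm norm_charFun_sub_le,
          integral_integral_mul_conj_cexp_inner μ₂ hDm norm_charFun_sub_le]
    _ = ∫ ω, D ω * conj (D ω) ∂Υ := by
        rw [← integral_sub (integrable_mul_conj_charFun hDm norm_charFun_sub_le μ₁)
          (integrable_mul_conj_charFun hDm norm_charFun_sub_le μ₂)]
        simp_rw [D, map_sub, mul_sub]
    _ = _ := by
        simp_rw [mul_conj', ← ofReal_pow]
        exact integral_complex_ofReal

end CharFun

theorem stmt_15_general (d : ℕ)
    {H : Type*} [NormedAddCommGroup H] [InnerProductSpace ℝ H] [CompleteSpace H]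
    (Φ : EuclideanSpace ℝ (Fin d) → H)
    (ψ : EuclideanSpace ℝ (Fin d) → ℝ)
    (hk : ∀ x y, (⟪Φ x, Φ y⟫ : ℝ) = ψ (x - y))
    (Υ : Measure (EuclideanSpace ℝ (Fin d))) [IsFiniteMeasure Υ] [Υ.IsOpenPosMeasure]
    (hrep : ∀ v : EuclideanSpace ℝ (Fin d),
      (ψ v : ℂ) = ∫ ω, Complex.exp (-Complex.I * ((⟪v, ω⟫ : ℝ) : ℂ)) ∂Υ) :
    (∀ μ₁ μ₂ : Measure (EuclideanSpace ℝ (Fin d)),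
      IsFiniteMeasure μ₁ → IsFiniteMeasure μ₂ → μ₁ ≠ μ₂ →
      0 < (∫ x, ((∫ y, ψ (x - y) ∂μ₁) - ∫ y, ψ (x - y) ∂μ₂) ∂μ₁)
          - (∫ x, ((∫ y, ψ (x - y) ∂μ₁) - ∫ y, ψ (x - y) ∂μ₂) ∂μ₂)) ∧
    (∀ μ₁ μ₂ : Measure (EuclideanSpace ℝ (Fin d)),
      IsFiniteMeasure μ₁ → IsFiniteMeasure μ₂ →
      Integrable Φ μ₁ → Integrable Φ μ₂ →
      (∫ x, Φ x ∂μ₁) = (∫ x, Φ x ∂μ₂) → μ₁ = μ₂) := by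
  refine ⟨fun μ₁ μ₂ _ _ hne => ?_, fun μ₁ μ₂ _ _ hΦ₁ hΦ₂ hmean => ?_⟩
  · rw [energy_eq_integral_norm_charFun_sub_sq hrep]
    exact integral_norm_charFun_sub_sq_pos hne
  · by_contra hne
    have hpos := integral_norm_charFun_sub_sq_pos (Υ := Υ) hne
    rw [← energy_eq_integral_norm_charFun_sub_sq hrep] at hpos
    have hzero (x : EuclideanSpace ℝ (Fin d)) :
        (∫ y, ψ (x - y) ∂μ₁) - ∫ y, ψ (x - y) ∂μ₂ = 0 := by
      rw [integral_kernel_eq_inner_integral hk hΦ₁, integral_kernel_eq_inner_integral hk hΦ₂,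
        hmean, sub_self]
    simp [hzero] at hpos

/-- Let `k(x,y) = ψ(x−y) = ⟪Φ x, Φ y⟫` be a bounded continuous
translation-invariant kernel on `ℝ^d` with spectral (Bochner) measure `Υ`. If `Υ` has full
support (every nonempty open set has positive `Υ`-measure), then `∬ k dμ dμ > 0` for every
nonzero finite signed Borel measure `μ = μ₁ − μ₂` (with `μ₁ ≠ μ₂` finite measures); in
particular the kernel mean embedding `μ ↦ ∫ k(·,x) dμ(x)` is injective on finite signed
measures. -/
theorem stmt_15 (d : ℕ)
    {H : Type*} [NormedAddCommGroup H] [InnerProductSpace ℝ H] [CompleteSpace H]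
    (Φ : EuclideanSpace ℝ (Fin d) → H)
    (ψ : EuclideanSpace ℝ (Fin d) → ℝ) (hψc : Continuous ψ)
    (Cb : ℝ) (hψb : ∀ v, |ψ v| ≤ Cb)
    (hk : ∀ x y, (⟪Φ x, Φ y⟫ : ℝ) = ψ (x - y))
    (Υ : Measure (EuclideanSpace ℝ (Fin d))) [IsFiniteMeasure Υ] [Υ.IsOpenPosMeasure]
    (hrep : ∀ v : EuclideanSpace ℝ (Fin d),
      (ψ v : ℂ) = ∫ ω, Complex.exp (-Complex.I * ((⟪v, ω⟫ : ℝ) : ℂ)) ∂Υ) :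
    (∀ μ₁ μ₂ : Measure (EuclideanSpace ℝ (Fin d)),
      IsFiniteMeasure μ₁ → IsFiniteMeasure μ₂ → μ₁ ≠ μ₂ →
      0 < (∫ x, ((∫ y, ψ (x - y) ∂μ₁) - ∫ y, ψ (x - y) ∂μ₂) ∂μ₁)
          - (∫ x, ((∫ y, ψ (x - y) ∂μ₁) - ∫ y, ψ (x - y) ∂μ₂) ∂μ₂)) ∧
    (∀ μ₁ μ₂ : Measure (EuclideanSpace ℝ (Fin d)),
      IsFiniteMeasure μ₁ → IsFiniteMeasure μ₂ →
      Integrable Φ μ₁ → Integrable Φ μ₂ →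
      (∫ x, Φ x ∂μ₁) = (∫ x, Φ x ∂μ₂) → μ₁ = μ₂) :=
  stmt_15_general d Φ ψ hk Υ hrep
end

section
/- Let X be a topological space and K a family of measurable reproducing kernels on X with ν := sup_{k∈K, x∈X} k(x,x) < ∞. Define, for Borel probability measures P, Q: ‖P−Q‖_{F_H} := sup_{k∈K} ‖∫k(·,x)dP − ∫k(·,x)dQ‖_{H_k} and ‖P−Q‖_{K_X} := sup_{k∈K, y∈X} |∫k(y,x) d(P−Q)(x)|. Then ν^{−1/2} ‖P−Q‖_{K_X} ≤ ‖P−Q‖_{F_H} ≤ √(2‖P−Q‖_{K_X}). -/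
open MeasureTheory
open scoped RealInnerProductSpace

/-!
Write `D = ∫ Φ dP - ∫ Φ dQ` for the difference of the kernel mean embeddings. Since integration
commutes with `⟪Φ y, ·⟫`, the kernel discrepancy at `y` is `⟪Φ y, D⟫`. Cauchy–Schwarz with
`‖Φ y‖ ≤ √ν` gives the left inequality. For the right one, `‖D‖² = ⟪D, D⟫` is again a
difference of integrals of the function `x ↦ ⟪Φ x, D⟫`, which is bounded by the kernel
discrepancy, against two probability measures, hence at most twice that discrepancy.
-/

section MeanEmbedding

variable {X : Type*} [MeasurableSpace X] {P Q : Measure X}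

lemma norm_integral_sub_integral_le {E : Type*} [NormedAddCommGroup E] [NormedSpace ℝ E]
    [IsProbabilityMeasure P] [IsProbabilityMeasure Q] {g : X → E} {C : ℝ}
    (hg : ∀ x, ‖g x‖ ≤ C) : ‖(∫ x, g x ∂P) - ∫ x, g x ∂Q‖ ≤ 2 * C := by
  have hP := norm_integral_le_of_norm_le_const (μ := P) (ae_of_all _ hg)
  have hQ := norm_integral_le_of_norm_le_const (μ := Q) (ae_of_all _ hg)
  rw [probReal_univ, mul_one] at hP hQ
  linarith [norm_sub_le (∫ x, g x ∂P) (∫ x, g x ∂Q)]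

variable {H : Type*} [NormedAddCommGroup H] [InnerProductSpace ℝ H] [CompleteSpace H]

lemma integral_inner_sub_integral_inner_s16 {f : X → H} (hfP : Integrable f P)
    (hfQ : Integrable f Q) (c : H) :
    (∫ x, ⟪c, f x⟫ ∂P) - ∫ x, ⟪c, f x⟫ ∂Q = ⟪c, (∫ x, f x ∂P) - ∫ x, f x ∂Q⟫ := by
  rw [integral_inner hfP, integral_inner hfQ, inner_sub_right]

lemma abs_inner_integral_sub_integral_le [IsProbabilityMeasure P] [IsProbabilityMeasure Q]
    {f : X → H} (hfP : Integrable f P) (hfQ : Integrable f Q) {c : H} {s : ℝ}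
    (hs : ∀ x, |⟪c, f x⟫| ≤ s) : |⟪c, (∫ x, f x ∂P) - ∫ x, f x ∂Q⟫| ≤ 2 * s := by
  rw [← integral_inner_sub_integral_inner_s16 hfP hfQ, ← Real.norm_eq_abs]
  exact norm_integral_sub_integral_le fun x => (Real.norm_eq_abs _).trans_le (hs x)

end MeanEmbedding

lemma le_ciSup₂_of_forall_le {α ι κ : Type*} [ConditionallyCompleteLattice α] {f : ι → κ → α}
    {C : α} (hC : ∀ i j, f i j ≤ C) (i : ι) (j : κ) : f i j ≤ ⨆ (i) (j), f i j :=
  le_ciSup₂ (f := f)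
    (bddAbove_Iic.mono (Set.iUnion_subset fun i => Set.range_subset_iff.2 (hC i))) i j

theorem stmt_16_general
    {X : Type*} [MeasurableSpace X]
    {H : Type*} [NormedAddCommGroup H] [InnerProductSpace ℝ H] [CompleteSpace H]
    {ι : Type*} (Φ : ι → X → H) (ν : ℝ)
    (hν : ∀ (i : ι) (x : X), (⟪Φ i x, Φ i x⟫ : ℝ) ≤ ν)
    (P Q : Measure X) [IsProbabilityMeasure P] [IsProbabilityMeasure Q]
    (hP : ∀ i, Integrable (Φ i) P) (hQ : ∀ i, Integrable (Φ i) Q) :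
    (Real.sqrt ν)⁻¹ *
        (⨆ i : ι, ⨆ y : X, |(∫ x, ⟪Φ i y, Φ i x⟫ ∂P) - ∫ x, ⟪Φ i y, Φ i x⟫ ∂Q|)
      ≤ (⨆ i : ι, ‖(∫ x, Φ i x ∂P) - ∫ x, Φ i x ∂Q‖) ∧
    (⨆ i : ι, ‖(∫ x, Φ i x ∂P) - ∫ x, Φ i x ∂Q‖)
      ≤ Real.sqrt (2 *
          ⨆ i : ι, ⨆ y : X, |(∫ x, ⟪Φ i y, Φ i x⟫ ∂P) - ∫ x, ⟪Φ i y, Φ i x⟫ ∂Q|) := by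
  set D : ι → H := fun i => (∫ x, Φ i x ∂P) - ∫ x, Φ i x ∂Q
  set S := ⨆ i : ι, ⨆ y : X, |(∫ x, ⟪Φ i y, Φ i x⟫ ∂P) - ∫ x, ⟪Φ i y, Φ i x⟫ ∂Q|
  have hΦ : ∀ i x, ‖Φ i x‖ ≤ √ν := fun i x =>
    Real.le_sqrt_of_sq_le ((real_inner_self_eq_norm_sq _).symm.trans_le (hν i x))
  have hkernel : ∀ i y, (∫ x, ⟪Φ i y, Φ i x⟫ ∂P) - ∫ x, ⟪Φ i y, Φ i x⟫ ∂Q = ⟪Φ i y, D i⟫ :=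
    fun i y => integral_inner_sub_integral_inner_s16 (hP i) (hQ i) _
  have hD : ∀ i, ‖D i‖ ≤ 2 * √ν := fun i => norm_integral_sub_integral_le (hΦ i)
  have hCS : ∀ i y, |⟪Φ i y, D i⟫| ≤ √ν * ‖D i‖ := fun i y =>
    (abs_real_inner_le_norm _ _).trans (mul_le_mul_of_nonneg_right (hΦ i y) (norm_nonneg _))
  have hF : 0 ≤ ⨆ i, ‖D i‖ := Real.iSup_nonneg fun _ => norm_nonneg _
  have hSF : S ≤ √ν * ⨆ i, ‖D i‖ := by
    have hνF := mul_nonneg (Real.sqrt_nonneg ν) hF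
    refine Real.iSup_le (fun i => Real.iSup_le (fun y => ?_) hνF) hνF
    rw [hkernel]
    exact (hCS i y).trans (mul_le_mul_of_nonneg_left
      (le_ciSup ⟨2 * √ν, Set.forall_mem_range.2 hD⟩ i) (Real.sqrt_nonneg ν))
  have hS : ∀ i y, |⟪Φ i y, D i⟫| ≤ S := fun i y => by
    simp only [S, hkernel]
    exact le_ciSup₂_of_forall_le (fun i y =>
      (hCS i y).trans (mul_le_mul_of_nonneg_left (hD i) (Real.sqrt_nonneg ν))) i y
  have hDS : ∀ i, ‖D i‖ ^ 2 ≤ 2 * S := fun i =>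
    calc ‖D i‖ ^ 2 = ⟪D i, D i⟫ := (real_inner_self_eq_norm_sq _).symm
      _ ≤ |⟪D i, D i⟫| := le_abs_self _
      _ ≤ 2 * S := abs_inner_integral_sub_integral_le (hP i) (hQ i) fun x => by
        rw [real_inner_comm]
        exact hS i x
  exact ⟨inv_mul_le_of_le_mul₀ (Real.sqrt_nonneg ν) hF hSF,
    Real.iSup_le (fun i => Real.le_sqrt_of_sq_le (hDS i)) (Real.sqrt_nonneg _)⟩

/-- Let `K = (k_i)_{i : ι}` be a uniformly bounded family of measurable
reproducing kernels on a topological space `X` (feature maps `Φ i`, `k_i x y = ⟪Φ i x, Φ i y⟫`,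
`k_i(x,x) ≤ ν`). For Borel probability measures `P, Q` define
`‖P−Q‖_{F_H} = sup_i ‖∫ k_i(·,x) dP − ∫ k_i(·,x) dQ‖_{H_{k_i}}` and
`‖P−Q‖_{K_X} = sup_{i,y} |∫ k_i(y,x) d(P−Q)(x)|`. Then
`ν^{−1/2} ‖P−Q‖_{K_X} ≤ ‖P−Q‖_{F_H} ≤ √(2 ‖P−Q‖_{K_X})`. -/
theorem stmt_16
    {X : Type*} [TopologicalSpace X] [MeasurableSpace X] [BorelSpace X]
    {H : Type*} [NormedAddCommGroup H] [InnerProductSpace ℝ H] [CompleteSpace H]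
    {ι : Type*} (Φ : ι → X → H) (ν : ℝ) (hν0 : 0 < ν)
    (hν : ∀ (i : ι) (x : X), (⟪Φ i x, Φ i x⟫ : ℝ) ≤ ν)
    (P Q : Measure X) [IsProbabilityMeasure P] [IsProbabilityMeasure Q]
    (hP : ∀ i, Integrable (Φ i) P) (hQ : ∀ i, Integrable (Φ i) Q) :
    (Real.sqrt ν)⁻¹ *
        (⨆ i : ι, ⨆ y : X, |(∫ x, ⟪Φ i y, Φ i x⟫ ∂P) - ∫ x, ⟪Φ i y, Φ i x⟫ ∂Q|)
      ≤ (⨆ i : ι, ‖(∫ x, Φ i x ∂P) - ∫ x, Φ i x ∂Q‖) ∧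
    (⨆ i : ι, ‖(∫ x, Φ i x ∂P) - ∫ x, Φ i x ∂Q‖)
      ≤ Real.sqrt (2 *
          ⨆ i : ι, ⨆ y : X, |(∫ x, ⟪Φ i y, Φ i x⟫ ∂P) - ∫ x, ⟪Φ i y, Φ i x⟫ ∂Q|) :=
  stmt_16_general Φ ν hν P Q hP hQ
end

section
/- Let G := {x ↦ e^{−σ(x−t)²} : σ ∈ (0,∞), t ∈ ℝ}, a class of functions on ℝ. Then for every ε > 0, the fat-shattering dimension of G at scale ε satisfies fat_ε(G) ≤ 1 + ⌊1/ε⌋. -/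
/-- Monotonicity of a Gaussian bump left of the center, along a monotone sequence. -/
lemma gauss_inc (σ t : ℝ) (hσ : 0 < σ) {a b : ℝ} (hab : a ≤ b) (hbt : b ≤ t) :
    Real.exp (-σ * (a - t) ^ 2) ≤ Real.exp (-σ * (b - t) ^ 2) := by
  apply Real.exp_le_exp.mpr
  nlinarith [mul_nonneg (mul_nonneg hσ.le (sub_nonneg.mpr hab))
    (show (0:ℝ) ≤ 2 * t - a - b by linarith)]

lemma gauss_dec (σ t : ℝ) (hσ : 0 < σ) {a b : ℝ} (hab : a ≤ b) (hta : t ≤ a) :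
    Real.exp (-σ * (b - t) ^ 2) ≤ Real.exp (-σ * (a - t) ^ 2) := by
  apply Real.exp_le_exp.mpr
  nlinarith [mul_nonneg (mul_nonneg hσ.le (sub_nonneg.mpr hab))
    (show (0:ℝ) ≤ a + b - 2 * t by linarith)]

/-- Total variation of a Gaussian bump along a monotone sequence is at most 2. -/
lemma gauss_tv (σ t : ℝ) (hσ : 0 < σ) (v : ℕ → ℝ) (hv : Monotone v) (m : ℕ) :
    ∑ j ∈ Finset.range m,
      |Real.exp (-σ * (v (j + 1) - t) ^ 2) - Real.exp (-σ * (v j - t) ^ 2)| ≤ 2 := by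
  set u : ℕ → ℝ := fun j => Real.exp (-σ * (v j - t) ^ 2) with hu
  have hu0 : ∀ j, 0 ≤ u j := fun j => (Real.exp_pos _).le
  have hu1 : ∀ j, u j ≤ 1 := by
    intro j
    calc u j ≤ Real.exp 0 := Real.exp_le_exp.mpr (by nlinarith [sq_nonneg (v j - t)])
    _ = 1 := Real.exp_zero
  -- argmax over range (m+1)
  obtain ⟨k, hkmem, hkmax⟩ := Finset.exists_max_image (Finset.range (m + 1)) u ⟨0, by simp⟩
  have hkm : k ≤ m := Nat.lt_succ_iff.mp (Finset.mem_range.mp hkmem)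
  have hmax : ∀ a, a ≤ m → u a ≤ u k := fun a ha =>
    hkmax a (Finset.mem_range.mpr (Nat.lt_succ_iff.mpr ha))
  have claim1 : ∀ j, j < k → u j ≤ u (j + 1) := by
    intro j hj
    by_cases hcase : v (j + 1) ≤ t
    · exact gauss_inc σ t hσ (hv (Nat.le_succ j)) hcase
    · have h1 : u k ≤ u (j + 1) :=
        gauss_dec σ t hσ (hv (by omega : j + 1 ≤ k)) (le_of_not_ge hcase)
      have h2 : u j ≤ u k := hmax j (by omega)
      linarith
  have claim2 : ∀ j, k ≤ j → j < m → u (j + 1) ≤ u j := by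
    intro j hj hjm
    by_cases hcase : t ≤ v j
    · exact gauss_dec σ t hσ (hv (Nat.le_succ j)) hcase
    · have h1 : u k ≤ u j := gauss_inc σ t hσ (hv hj) (le_of_not_ge hcase)
      have h2 : u (j + 1) ≤ u k := hmax (j + 1) (by omega)
      linarith
  have hsplit : ∑ j ∈ Finset.range m, |u (j + 1) - u j|
      = ∑ j ∈ Finset.range k, |u (j + 1) - u j| + ∑ j ∈ Finset.Ico k m, |u (j + 1) - u j| := by
    rw [Finset.range_eq_Ico, ← Finset.sum_Ico_consecutive _ (Nat.zero_le k) hkm,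
      ← Finset.range_eq_Ico]
  have h1 : ∑ j ∈ Finset.range k, |u (j + 1) - u j| = u k - u 0 := by
    rw [show ∑ j ∈ Finset.range k, |u (j + 1) - u j|
        = ∑ j ∈ Finset.range k, (u (j + 1) - u j) from
      Finset.sum_congr rfl fun j hj =>
        abs_of_nonneg (sub_nonneg.mpr (claim1 j (Finset.mem_range.mp hj)))]
    exact Finset.sum_range_sub u k
  have h2 : ∑ j ∈ Finset.Ico k m, |u (j + 1) - u j| = u k - u m := by
    rw [show ∑ j ∈ Finset.Ico k m, |u (j + 1) - u j|
        = ∑ j ∈ Finset.Ico k m, (u j - u (j + 1)) from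
      Finset.sum_congr rfl fun j hj => by
        rw [abs_sub_comm]
        exact abs_of_nonneg (sub_nonneg.mpr
          (claim2 j (Finset.mem_Ico.mp hj).1 (Finset.mem_Ico.mp hj).2))]
    rw [Finset.sum_Ico_eq_sub _ hkm, Finset.sum_range_sub' u m, Finset.sum_range_sub' u k]
    ring
  rw [hsplit, h1, h2]
  have := hu0 0; have := hu0 m; have := hu1 k
  linarith


/-- Main combinatorial lemma for a monotone (sorted) sequence of points. -/
lemma aux_sorted (ε : ℝ) (hε : 0 < ε) (n : ℕ) (w : Fin n → ℝ) (hw : Monotone w)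
    (r : Fin n → ℝ)
    (H : ∀ b : Fin n → Bool, ∃ σ t : ℝ, 0 < σ ∧
      ∀ i, (b i = true → Real.exp (-σ * (w i - t) ^ 2) ≥ r i + ε) ∧
           (b i = false → Real.exp (-σ * (w i - t) ^ 2) ≤ r i - ε)) :
    n ≤ 1 + ⌊1 / ε⌋₊ := by
  by_cases hn : n ≤ 1
  · omega
  push_neg at hn
  obtain ⟨σ₁, t₁, hσ₁, h₁⟩ := H (fun i => decide (Even (i : ℕ)))
  obtain ⟨σ₂, t₂, hσ₂, h₂⟩ := H (fun i => ! decide (Even (i : ℕ)))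
  set v : ℕ → ℝ := fun j => w ⟨min j (n - 1), by omega⟩ with hv
  have hvmono : Monotone v := by
    intro a c hac
    exact hw (show (⟨min a (n-1), by omega⟩ : Fin n) ≤ ⟨min c (n-1), by omega⟩ by
      simp only [Fin.mk_le_mk]; omega)
  have key : ∀ j ∈ Finset.range (n - 1),
      4 * ε ≤ |Real.exp (-σ₁ * (v (j+1) - t₁) ^ 2) - Real.exp (-σ₁ * (v j - t₁) ^ 2)|
            + |Real.exp (-σ₂ * (v (j+1) - t₂) ^ 2) - Real.exp (-σ₂ * (v j - t₂) ^ 2)| := by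
    intro j hj
    have hjn : j < n - 1 := Finset.mem_range.mp hj
    have hj1 : j < n := by omega
    have hj2 : j + 1 < n := by omega
    have hvj : v j = w ⟨j, hj1⟩ := by
      show w _ = w _
      congr 1
      simp only [Fin.mk.injEq]; omega
    have hvj1 : v (j + 1) = w ⟨j + 1, hj2⟩ := by
      show w _ = w _
      congr 1
      simp only [Fin.mk.injEq]; omega
    rw [hvj, hvj1]
    rcases Nat.even_or_odd j with hpar | hpar
    · have A1 := (h₁ ⟨j, hj1⟩).1 (by simp [hpar])
      have A2 := (h₁ ⟨j + 1, hj2⟩).2 (by simp [Nat.even_add_one, hpar])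
      have B1 := (h₂ ⟨j, hj1⟩).2 (by simp [hpar])
      have B2 := (h₂ ⟨j + 1, hj2⟩).1 (by simp [Nat.even_add_one, hpar])
      have l1 := neg_abs_le
        (Real.exp (-σ₁ * (w ⟨j+1, hj2⟩ - t₁) ^ 2) - Real.exp (-σ₁ * (w ⟨j, hj1⟩ - t₁) ^ 2))
      have l2 := le_abs_self
        (Real.exp (-σ₂ * (w ⟨j+1, hj2⟩ - t₂) ^ 2) - Real.exp (-σ₂ * (w ⟨j, hj1⟩ - t₂) ^ 2))
      linarith
    · have hodd := Nat.not_even_iff_odd.mpr hpar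
      have A1 := (h₁ ⟨j, hj1⟩).2 (by simp [hodd])
      have A2 := (h₁ ⟨j + 1, hj2⟩).1 (by simp [Nat.even_add_one, hodd])
      have B1 := (h₂ ⟨j, hj1⟩).1 (by simp [hodd])
      have B2 := (h₂ ⟨j + 1, hj2⟩).2 (by simp [Nat.even_add_one, hodd])
      have l1 := le_abs_self
        (Real.exp (-σ₁ * (w ⟨j+1, hj2⟩ - t₁) ^ 2) - Real.exp (-σ₁ * (w ⟨j, hj1⟩ - t₁) ^ 2))
      have l2 := neg_abs_le
        (Real.exp (-σ₂ * (w ⟨j+1, hj2⟩ - t₂) ^ 2) - Real.exp (-σ₂ * (w ⟨j, hj1⟩ - t₂) ^ 2))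
      linarith
  have hsum : (n - 1 : ℕ) * (4 * ε) ≤ 4 := by
    have hle : ((n - 1 : ℕ) : ℝ) * (4 * ε) = ∑ _j ∈ Finset.range (n - 1), (4 * ε) := by
      rw [Finset.sum_const, nsmul_eq_mul]; simp
    rw [hle]
    calc ∑ _j ∈ Finset.range (n - 1), (4 * ε)
        ≤ ∑ j ∈ Finset.range (n - 1),
            (|Real.exp (-σ₁ * (v (j+1) - t₁) ^ 2) - Real.exp (-σ₁ * (v j - t₁) ^ 2)|
           + |Real.exp (-σ₂ * (v (j+1) - t₂) ^ 2) - Real.exp (-σ₂ * (v j - t₂) ^ 2)|) :=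
          Finset.sum_le_sum key
      _ = ∑ j ∈ Finset.range (n - 1),
            |Real.exp (-σ₁ * (v (j+1) - t₁) ^ 2) - Real.exp (-σ₁ * (v j - t₁) ^ 2)|
          + ∑ j ∈ Finset.range (n - 1),
            |Real.exp (-σ₂ * (v (j+1) - t₂) ^ 2) - Real.exp (-σ₂ * (v j - t₂) ^ 2)| :=
          Finset.sum_add_distrib
      _ ≤ 2 + 2 := add_le_add (gauss_tv σ₁ t₁ hσ₁ v hvmono (n - 1))
            (gauss_tv σ₂ t₂ hσ₂ v hvmono (n - 1))
      _ = 4 := by norm_num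
  have hfl : (n - 1 : ℕ) ≤ ⌊1 / ε⌋₊ := by
    apply Nat.le_floor
    rw [le_div_iff₀ hε]
    nlinarith
  omega

/-- The class `G = {x ↦ e^{−σ(x−t)²} : σ > 0, t ∈ ℝ}` of Gaussian bumps on
`ℝ` has fat-shattering dimension at scale `ε` at most `1 + ⌊1/ε⌋`: if a finite set
`{z₁,…,z_n} ⊂ ℝ` is `ε`-shattered by `G` (there exist levels `r_i` such that each pattern
`b ∈ {0,1}^n` is realized by some `g ∈ G` with `g(z_i) ≥ r_i + ε` when `b_i = 1` and
`g(z_i) ≤ r_i − ε` when `b_i = 0`), then `n ≤ 1 + ⌊1/ε⌋`. -/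
theorem stmt_17 (ε : ℝ) (hε : 0 < ε) (n : ℕ) (z : Fin n → ℝ) (hz : Function.Injective z)
    (hshatter : ∃ r : Fin n → ℝ, ∀ b : Fin n → Bool, ∃ σ t : ℝ, 0 < σ ∧
      ∀ i, (b i = true → Real.exp (-σ * (z i - t) ^ 2) ≥ r i + ε) ∧
           (b i = false → Real.exp (-σ * (z i - t) ^ 2) ≤ r i - ε)) :
    n ≤ 1 + ⌊1 / ε⌋₊ := by
  obtain ⟨r, hsh⟩ := hshatter
  refine aux_sorted ε hε n (z ∘ Tuple.sort z) (Tuple.monotone_sort z) (r ∘ Tuple.sort z) ?_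
  intro b
  obtain ⟨σ, t, hσ, h⟩ := hsh (b ∘ (Tuple.sort z).symm)
  exact ⟨σ, t, hσ, fun i => by simpa using h (Tuple.sort z i)⟩
end

section
/- For d ≥ 1, β > d/2 and c > 0, the Matérn kernel admits the Schönberg/Gaussian-mixture representation: A · (‖x−y‖₂^{β−d/2} / c^{d/2−β}) · K_{d/2−β}(c‖x−y‖₂) = (c^{2β−d}/Γ(β−d/2)) ∫₀^∞ e^{−‖x−y‖₂²/(4t)} t^{β−1−d/2} e^{−c²t} dt for all x ≠ y in ℝ^d, where A = 2^{d/2+1−β}/Γ(β−d/2) and K_ν is the modified Bessel function of the third kind. Consequently sup_{x,y} k(x,y) = 1 (value at x = y). -/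
open MeasureTheory

/-- The modified Bessel function of the third (second) kind `K_ν(z)`, via its standard
integral representation `K_ν(z) = (1/2) (z/2)^ν ∫₀^∞ e^{−t − z²/(4t)} t^{−ν−1} dt`
(valid for `z > 0`). -/
noncomputable def besselK (ν z : ℝ) : ℝ :=
  (1 / 2) * (z / 2) ^ ν *
    ∫ t in Set.Ioi (0 : ℝ), Real.exp (-t - z ^ 2 / (4 * t)) * t ^ (-ν - 1)

/-!
With the integral representation of `K_ν`, the substitution `u = c² t` turns
`K_{-s}(c r)` into the Gaussian mixture `∫₀^∞ e^{-r²/(4t)} t^{s-1} e^{-c² t} dt`, up to the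
factor `2^{s-1} (c/r)^s`. Since `e^{-r²/(4t)} ≤ 1`, the mixture is largest at `r = 0`, where it
is the Gamma integral `Γ(s) / c^{2s}`; so the normalised kernel has supremum `1`.
-/

open Set Real

noncomputable def gaussianMixture (s c r : ℝ) : ℝ :=
  ∫ t in Ioi (0 : ℝ), exp (-r ^ 2 / (4 * t)) * t ^ (s - 1) * exp (-c ^ 2 * t)

section GaussianMixture

variable {s c : ℝ}

lemma integral_exp_neg_sub_div_mul_rpow_eq_gaussianMixture (r : ℝ) (hc : c ≠ 0) :
    ∫ u in Ioi (0 : ℝ), exp (-u - (c * r) ^ 2 / (4 * u)) * u ^ (s - 1)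
      = (c ^ 2) ^ s * gaussianMixture s c r := by
  have hc2 : 0 < c ^ 2 := by positivity
  calc ∫ u in Ioi (0 : ℝ), exp (-u - (c * r) ^ 2 / (4 * u)) * u ^ (s - 1)
      = c ^ 2 * ∫ t in Ioi (0 : ℝ),
          exp (-(c ^ 2 * t) - (c * r) ^ 2 / (4 * (c ^ 2 * t))) * (c ^ 2 * t) ^ (s - 1) := by
        rw [integral_comp_mul_left_Ioi (fun u => exp (-u - (c * r) ^ 2 / (4 * u)) * u ^ (s - 1))
          0 hc2, mul_zero, smul_eq_mul, mul_inv_cancel_left₀ hc2.ne']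
    _ = c ^ 2 * ∫ t in Ioi (0 : ℝ), (c ^ 2) ^ (s - 1) *
          (exp (-r ^ 2 / (4 * t)) * t ^ (s - 1) * exp (-c ^ 2 * t)) := by
        congr 1
        refine setIntegral_congr_fun measurableSet_Ioi fun t (ht : 0 < t) => ?_
        have hexp : -(c ^ 2 * t) - (c * r) ^ 2 / (4 * (c ^ 2 * t))
            = -r ^ 2 / (4 * t) + -c ^ 2 * t := by
          field_simp
          ring
        rw [mul_rpow hc2.le ht.le, hexp, exp_add]
        ring
    _ = (c ^ 2) ^ s * gaussianMixture s c r := by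
        rw [integral_const_mul, ← mul_assoc, mul_comm (c ^ 2), ← rpow_add_one hc2.ne',
          sub_add_cancel, gaussianMixture]

lemma gaussianMixture_zero (hs : 0 < s) (hc : c ≠ 0) :
    gaussianMixture s c 0 = Gamma s / (c ^ 2) ^ s := by
  have hc2 : 0 < c ^ 2 := by positivity
  calc gaussianMixture s c 0 = ∫ t in Ioi (0 : ℝ), t ^ (s - 1) * exp (-(c ^ 2 * t)) := by
        refine setIntegral_congr_fun measurableSet_Ioi fun t _ => ?_
        simp [neg_mul]
    _ = Gamma s / (c ^ 2) ^ s := by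
        rw [integral_rpow_mul_exp_neg_mul_Ioi hs hc2, one_div, inv_rpow hc2.le,
          inv_mul_eq_div]

lemma gaussianMixture_le_zero (hs : 0 < s) (hc : c ≠ 0) (r : ℝ) :
    gaussianMixture s c r ≤ gaussianMixture s c 0 := by
  have hc2 : 0 < c ^ 2 := by positivity
  have hint : IntegrableOn (fun t : ℝ => exp (-(0 : ℝ) ^ 2 / (4 * t)) * t ^ (s - 1)
      * exp (-c ^ 2 * t)) (Ioi 0) := by
    simpa [mul_comm] using
      integrableOn_rpow_mul_exp_neg_mul_rpow (p := 1) (by linarith : -1 < s - 1) one_pos hc2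
  refine integral_mono_of_nonneg ?_ hint ?_ <;>
    filter_upwards [ae_restrict_mem measurableSet_Ioi] with t (ht : 0 < t)
  · positivity
  · have hdecay : exp (-r ^ 2 / (4 * t)) ≤ exp (-(0 : ℝ) ^ 2 / (4 * t)) :=
      exp_le_exp.mpr (div_le_div_of_nonneg_right (by nlinarith [sq_nonneg r]) (by positivity))
    gcongr

end GaussianMixture

lemma matern_eq_gaussianMixture {s c r : ℝ} (hc : 0 < c) (hr : 0 < r) :
    2 ^ (1 - s) * (r ^ s / c ^ (-s)) * besselK (-s) (c * r)
      = (c ^ 2) ^ s * gaussianMixture s c r := by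
  rw [besselK, neg_neg, integral_exp_neg_sub_div_mul_rpow_eq_gaussianMixture r hc.ne',
    rpow_neg (x := c * r / 2) (by positivity), rpow_neg hc.le,
    div_rpow (by positivity) zero_le_two, mul_rpow hc.le hr.le, rpow_sub two_pos, rpow_one,
    ← rpow_two, ← rpow_mul hc.le, mul_comm 2 s, rpow_mul hc.le]
  have hcs : 0 < c ^ s := by positivity
  have hrs : 0 < r ^ s := by positivity
  field_simp

lemma iSup_iSup_comp_norm_sub_eq {E : Type*} [SeminormedAddCommGroup E] [Nonempty E]
    {F : ℝ → ℝ} (hF : ∀ r, 0 ≤ r → F r ≤ F 0) :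
    ⨆ x : E, ⨆ y : E, F ‖x - y‖ = F 0 := by
  have hinner (x : E) : ⨆ y : E, F ‖x - y‖ = F 0 := by
    refine le_antisymm (ciSup_le fun y => hF _ (norm_nonneg _)) ?_
    refine le_ciSup_of_le ⟨F 0, ?_⟩ x (by rw [sub_self, norm_zero])
    rintro _ ⟨y, rfl⟩
    exact hF _ (norm_nonneg _)
  simp only [hinner, ciSup_const]

theorem stmt_18_general (d : ℕ) (β c : ℝ) (hβ : (d : ℝ) / 2 < β) (hc : 0 < c) :
    (∀ x y : EuclideanSpace ℝ (Fin d), x ≠ y →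
      ((2 : ℝ) ^ ((d : ℝ) / 2 + 1 - β) / Real.Gamma (β - (d : ℝ) / 2))
          * (‖x - y‖ ^ (β - (d : ℝ) / 2) / c ^ ((d : ℝ) / 2 - β))
          * besselK ((d : ℝ) / 2 - β) (c * ‖x - y‖)
        = (c ^ (2 * β - (d : ℝ)) / Real.Gamma (β - (d : ℝ) / 2))
          * ∫ t in Set.Ioi (0 : ℝ),
              Real.exp (-‖x - y‖ ^ 2 / (4 * t)) * t ^ (β - 1 - (d : ℝ) / 2)
                * Real.exp (-c ^ 2 * t)) ∧
    (⨆ x : EuclideanSpace ℝ (Fin d), ⨆ y : EuclideanSpace ℝ (Fin d),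
      (c ^ (2 * β - (d : ℝ)) / Real.Gamma (β - (d : ℝ) / 2))
        * ∫ t in Set.Ioi (0 : ℝ),
            Real.exp (-‖x - y‖ ^ 2 / (4 * t)) * t ^ (β - 1 - (d : ℝ) / 2)
              * Real.exp (-c ^ 2 * t)) = 1 := by
  obtain ⟨s, hs, rfl⟩ : ∃ s, 0 < s ∧ β = s + d / 2 := ⟨β - d / 2, by linarith, by ring⟩
  rw [show (d : ℝ) / 2 + 1 - (s + d / 2) = 1 - s by ring, show s + d / 2 - d / 2 = s by ring,
    show (d : ℝ) / 2 - (s + d / 2) = -s by ring, show s + d / 2 - 1 - d / 2 = s - 1 by ring,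
    show 2 * (s + d / 2) - d = 2 * s by ring, rpow_mul hc.le, rpow_two]
  refine ⟨fun x y hxy => ?_, ?_⟩
  · have h := matern_eq_gaussianMixture (s := s) hc (norm_sub_pos_iff.mpr hxy)
    rw [gaussianMixture] at h
    linear_combination h / Gamma s
  · refine (iSup_iSup_comp_norm_sub_eq
      (F := fun r => (c ^ 2) ^ s / Gamma s * gaussianMixture s c r) fun r _ => ?_).trans ?_
    · exact mul_le_mul_of_nonneg_left (gaussianMixture_le_zero hs hc.ne' r) (by positivity)
    · have hΓ : 0 < Gamma s := Gamma_pos_of_pos hs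
      simp only [gaussianMixture_zero hs hc.ne']
      field_simp

/-- For `d ≥ 1`, `β > d/2`, `c > 0`, the Matérn kernel admits the
Schönberg/Gaussian-mixture representation
`A ‖x−y‖^{β−d/2} c^{β−d/2} K_{d/2−β}(c‖x−y‖) = (c^{2β−d}/Γ(β−d/2)) ∫₀^∞ e^{−‖x−y‖²/(4t)}
t^{β−1−d/2} e^{−c²t} dt` for all `x ≠ y`, where `A = 2^{d/2+1−β}/Γ(β−d/2)`. Consequently the
supremum of the kernel (given by the mixture form, which extends to `x = y`) equals `1`. -/
theorem stmt_18 (d : ℕ) (β c : ℝ) (hd : 1 ≤ d) (hβ : (d : ℝ) / 2 < β) (hc : 0 < c) :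
    (∀ x y : EuclideanSpace ℝ (Fin d), x ≠ y →
      ((2 : ℝ) ^ ((d : ℝ) / 2 + 1 - β) / Real.Gamma (β - (d : ℝ) / 2))
          * (‖x - y‖ ^ (β - (d : ℝ) / 2) / c ^ ((d : ℝ) / 2 - β))
          * besselK ((d : ℝ) / 2 - β) (c * ‖x - y‖)
        = (c ^ (2 * β - (d : ℝ)) / Real.Gamma (β - (d : ℝ) / 2))
          * ∫ t in Set.Ioi (0 : ℝ),
              Real.exp (-‖x - y‖ ^ 2 / (4 * t)) * t ^ (β - 1 - (d : ℝ) / 2)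
                * Real.exp (-c ^ 2 * t)) ∧
    (⨆ x : EuclideanSpace ℝ (Fin d), ⨆ y : EuclideanSpace ℝ (Fin d),
      (c ^ (2 * β - (d : ℝ)) / Real.Gamma (β - (d : ℝ) / 2))
        * ∫ t in Set.Ioi (0 : ℝ),
            Real.exp (-‖x - y‖ ^ 2 / (4 * t)) * t ^ (β - 1 - (d : ℝ) / 2)
              * Real.exp (-c ^ 2 * t)) = 1 :=
  stmt_18_general d β c hβ hc
end
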